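/- arXiv:2408.08457 — 2 statements merged into one kernel-verified Lean document; each statement's English description precedes it below -/
import Mathlib

section
/- (Decision tree Harris–Kleitman inequality.) Let G=(V,E) be a finite simple graph, let μ be the Bernoulli bond-percolation product measure on Ω={0,1}^E, and let (C₁,C₂) be sampled from μ×μ. Let T be any decision tree for pairs of configurations and let S=S(C₁,C₂) be the random edge set it builds. Then for any closed-upward events A,B⊆Ω, P(C₁∈A and C₁→_S C₂∈B) ≥ μ(A)·μ(B). -/
/-!
Induct on the tree, conditioning on the states `(b₁, b₂)` of the root edge `e` in `C₁` and `C₂`.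
The subtree reached never queries `e` again, so the set `S` it builds avoids `e` and does not
depend on the `e`-coordinates. The event therefore becomes the event of the subtree for the
slices `A_{b₁} = {C | C[e ↦ b₁] ∈ A}` and `B_{b'}`, where `b' = b₁` if the root puts `e` into `S`
and `b' = b₂` otherwise; slices of upward closed events are upward closed. When `e ∉ S` the two
slices are independent and the bounds multiply out. When `e ∈ S` both are indexed by `b₁`, and
what is left is `E[a(b) c(b)] ≥ E[a(b)] E[c(b)]` for the increasing functions `b ↦ μ(A_b)`,
`b ↦ μ(B_b)` of one Bernoulli variable: the Harris inequality on a single edge.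
-/

namespace DTPerc

variable {E : Type*} [Fintype E] [DecidableEq E]

/-- Bernoulli product weight of a configuration. -/
noncomputable def wt (p : E → ℝ) (C : E → Bool) : ℝ :=
  ∏ e, if C e then p e else 1 - p e

/-- Probability of an event under the Bernoulli product measure. -/
noncomputable def Pr (p : E → ℝ) (A : Set (E → Bool)) : ℝ :=
  ∑ C : E → Bool, A.indicator (wt p) C

/-- Probability of an event for an independent pair `(C₁, C₂) ~ μ × μ`. -/
noncomputable def Pr2 (p : E → ℝ) (A : Set ((E → Bool) × (E → Bool))) : ℝ :=
  ∑ x : (E → Bool) × (E → Bool), A.indicator (fun y => wt p y.1 * wt p y.2) x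

/-- A decision tree for pairs of configurations: every decision node queries an edge,
decides whether it goes to `S` (`toS = true`) or to `S̄`, and has four children indexed
by the pair of revealed values of the edge in the two configurations. -/
inductive PairTree (E : Type u) : Type u
  | leaf : PairTree E
  | node (e : E) (toS : Bool) (child : Bool → Bool → PairTree E) : PairTree E

/-- The edges queried along any root-to-leaf path are pairwise distinct
(`used` is the set of edges already queried above the current node). -/
def PairTree.valid : PairTree E → Finset E → Prop
  | .leaf, _ => True
  | .node e _ child, used =>
      e ∉ used ∧ ∀ b₁ b₂ : Bool, (child b₁ b₂).valid (insert e used)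

/-- The set `S(C₁, C₂)` built by the decision tree. -/
def PairTree.buildS : PairTree E → (E → Bool) → (E → Bool) → Finset E
  | .leaf, _, _ => ∅
  | .node e toS child, C₁, C₂ =>
      let rest := (child (C₁ e) (C₂ e)).buildS C₁ C₂
      if toS then insert e rest else rest

/-- `C₁ →_S C₂`: the configuration equal to `C₁` on `S` and to `C₂` off `S`. -/
def splice (S : Finset E) (C₁ C₂ : E → Bool) : E → Bool :=
  fun e => if e ∈ S then C₁ e else C₂ e

/-- An event is closed upward if it is preserved by opening more edges. -/
def UpwardClosed (A : Set (E → Bool)) : Prop :=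
  ∀ C₁ C₂ : E → Bool, C₁ ∈ A → (∀ e, C₁ e = true → C₂ e = true) → C₂ ∈ A

end DTPerc

namespace DTPerc

open Function

def bernWeight (q : ℝ) (b : Bool) : ℝ := if b then q else 1 - q

lemma sum_bernWeight (q : ℝ) : ∑ b, bernWeight q b = 1 := by
  simp [bernWeight]

lemma mul_le_sum_sum_bernWeight {q : ℝ} (hq : 0 ≤ q ∧ q ≤ 1) {a c : Bool → ℝ}
    (ha : a false ≤ a true) (hc : c false ≤ c true) (toS : Bool) (S : Bool → Bool → ℝ)
    (hS : ∀ b₁ b₂, a b₁ * c (if toS then b₁ else b₂) ≤ S b₁ b₂) :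
    (∑ b, bernWeight q b * a b) * (∑ b, bernWeight q b * c b)
      ≤ ∑ b₁, ∑ b₂, bernWeight q b₁ * bernWeight q b₂ * S b₁ b₂ := by
  obtain ⟨hq0, hq1⟩ := hq
  have hq1' : 0 ≤ 1 - q := sub_nonneg.2 hq1
  have h11 := hS true true
  have h10 := hS true false
  have h01 := hS false true
  have h00 := hS false false
  cases toS <;> simp only [Fintype.sum_bool, bernWeight, if_true, Bool.false_eq_true, if_false]
    at h11 h10 h01 h00 ⊢
  · nlinarith [mul_nonneg (mul_nonneg hq0 hq0) (sub_nonneg.2 h11),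
      mul_nonneg (mul_nonneg hq0 hq1') (sub_nonneg.2 h10),
      mul_nonneg (mul_nonneg hq1' hq0) (sub_nonneg.2 h01),
      mul_nonneg (mul_nonneg hq1' hq1') (sub_nonneg.2 h00)]
  · nlinarith [mul_nonneg (mul_nonneg hq0 hq0) (sub_nonneg.2 h11),
      mul_nonneg (mul_nonneg hq0 hq1') (sub_nonneg.2 h10),
      mul_nonneg (mul_nonneg hq1' hq0) (sub_nonneg.2 h01),
      mul_nonneg (mul_nonneg hq1' hq1') (sub_nonneg.2 h00),
      mul_nonneg (mul_nonneg (mul_nonneg hq0 hq1') (sub_nonneg.2 ha)) (sub_nonneg.2 hc)]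

section Configurations

variable {E : Type*} [DecidableEq E]

def slice (A : Set (E → Bool)) (e : E) (b : Bool) : Set (E → Bool) :=
  {C | update C e b ∈ A}

def slice₂ (X : Set ((E → Bool) × (E → Bool))) (e : E) (b₁ b₂ : Bool) :
    Set ((E → Bool) × (E → Bool)) :=
  {x | (update x.1 e b₁, update x.2 e b₂) ∈ X}

def spliceEvent (T : PairTree E) (A B : Set (E → Bool)) : Set ((E → Bool) × (E → Bool)) :=
  {x | x.1 ∈ A ∧ splice (T.buildS x.1 x.2) x.1 x.2 ∈ B}

lemma UpwardClosed.slice_false_subset {A : Set (E → Bool)} (hA : UpwardClosed A) (e : E) :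
    slice A e false ⊆ slice A e true := by
  intro C hC
  refine hA _ _ hC fun x hx => ?_
  rcases eq_or_ne x e with rfl | h
  · simp
  · simpa [update_of_ne h] using hx

lemma UpwardClosed.slice {A : Set (E → Bool)} (hA : UpwardClosed A) (e : E) (b : Bool) :
    UpwardClosed (slice A e b) := by
  intro C C' hC hle
  refine hA _ _ hC fun x hx => ?_
  rcases eq_or_ne x e with rfl | h
  · simpa using hx
  · simpa [update_of_ne h] using hle x (by simpa [update_of_ne h] using hx)

lemma update_funSplitAt_symm (e : E) (b b' : Bool) (r : {j // j ≠ e} → Bool) :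
    update ((Equiv.funSplitAt e Bool).symm (b, r)) e b'
      = (Equiv.funSplitAt e Bool).symm (b', r) := by
  funext j
  by_cases h : j = e
  · subst h; simp
  · simp [h]

lemma PairTree.buildS_update {T : PairTree E} {u : Finset E} (hT : T.valid u) {e : E}
    (he : e ∈ u) (C₁ C₂ : E → Bool) (b₁ b₂ : Bool) :
    T.buildS (update C₁ e b₁) (update C₂ e b₂) = T.buildS C₁ C₂ := by
  induction T generalizing u with
  | leaf => rfl
  | node e' toS child ih =>
    obtain ⟨he', hchild⟩ := hT
    have hne : e' ≠ e := fun h => he' (h ▸ he)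
    simp only [PairTree.buildS, update_of_ne hne,
      ih _ _ (hchild _ _) (Finset.mem_insert_of_mem he)]

lemma PairTree.notMem_buildS {T : PairTree E} {u : Finset E} (hT : T.valid u) {e : E}
    (he : e ∈ u) (C₁ C₂ : E → Bool) : e ∉ T.buildS C₁ C₂ := by
  induction T generalizing u with
  | leaf => simp [PairTree.buildS]
  | node e' toS child ih =>
    obtain ⟨he', hchild⟩ := hT
    have hne : e ≠ e' := fun h => he' (h ▸ he)
    have hrest := ih _ _ (hchild (C₁ e') (C₂ e')) (Finset.mem_insert_of_mem he)
    cases toS <;> simp [PairTree.buildS, hne, hrest]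

lemma splice_ite_insert_update {R : Finset E} {e : E} (he : e ∉ R) (toS : Bool)
    (C₁ C₂ : E → Bool) (b₁ b₂ : Bool) :
    splice (if toS then insert e R else R) (update C₁ e b₁) (update C₂ e b₂)
      = update (splice R C₁ C₂) e (if toS then b₁ else b₂) := by
  funext a
  rcases eq_or_ne a e with rfl | ha <;> cases toS <;> simp [splice, update_of_ne, *]

lemma splice_empty (C₁ C₂ : E → Bool) : splice ∅ C₁ C₂ = C₂ := by
  funext a
  simp [splice]

lemma spliceEvent_leaf (A B : Set (E → Bool)) :
    spliceEvent .leaf A B = {x | x.1 ∈ A ∧ x.2 ∈ B} := by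
  simp [spliceEvent, PairTree.buildS, splice_empty]

lemma slice₂_spliceEvent_node {e : E} {toS : Bool} {child : Bool → Bool → PairTree E}
    {u : Finset E} (hchild : ∀ b₁ b₂, (child b₁ b₂).valid (insert e u))
    (A B : Set (E → Bool)) (b₁ b₂ : Bool) :
    slice₂ (spliceEvent (.node e toS child) A B) e b₁ b₂
      = spliceEvent (child b₁ b₂) (slice A e b₁) (slice B e (if toS then b₁ else b₂)) := by
  ext ⟨C₁, C₂⟩
  have he := Finset.mem_insert_self e u
  simp only [slice₂, spliceEvent, slice, Set.mem_ofPred_eq, PairTree.buildS, update_self,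
    PairTree.buildS_update (hchild b₁ b₂) he,
    splice_ite_insert_update (PairTree.notMem_buildS (hchild b₁ b₂) he C₁ C₂)]

end Configurations

variable {E : Type*} [Fintype E]

lemma wt_nonneg {p : E → ℝ} (hp : ∀ e, 0 ≤ p e ∧ p e ≤ 1) (C : E → Bool) : 0 ≤ wt p C :=
  Finset.prod_nonneg fun e _ => by
    cases C e <;> simp [sub_nonneg, hp e]

variable [DecidableEq E]

noncomputable def expect (p : E → ℝ) (f : (E → Bool) → ℝ) : ℝ := ∑ C, wt p C * f C

lemma wt_funSplitAt_symm (p : E → ℝ) (e : E) (b : Bool) (r : {j // j ≠ e} → Bool) :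
    wt p ((Equiv.funSplitAt e Bool).symm (b, r))
      = bernWeight (p e) b * ∏ j : {j // j ≠ e}, bernWeight (p j) (r j) := by
  rw [wt, Fintype.prod_eq_mul_prod_subtype_ne _ e]
  congr 1
  · simp [bernWeight]
  · exact Finset.prod_congr rfl fun j _ => by simp [bernWeight, j.2]

lemma expect_eq_sum_update (p : E → ℝ) (e : E) (f : (E → Bool) → ℝ) :
    expect p f = ∑ b, bernWeight (p e) b * expect p (fun C => f (update C e b)) := by
  have split : ∀ g : (E → Bool) → ℝ,
      ∑ C, g C = ∑ b, ∑ r, g ((Equiv.funSplitAt e Bool).symm (b, r)) := fun g => by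
    rw [← (Equiv.funSplitAt e Bool).symm.sum_comp, Fintype.sum_prod_type]
  have average : ∀ g : ({j // j ≠ e} → Bool) → ℝ, ∑ b, ∑ r,
      bernWeight (p e) b * (∏ j : {j // j ≠ e}, bernWeight (p j) (r j)) * g r
        = ∑ r, (∏ j : {j // j ≠ e}, bernWeight (p j) (r j)) * g r := fun g => by
    rw [Finset.sum_comm]
    simp_rw [mul_assoc, ← Finset.sum_mul, sum_bernWeight, one_mul]
  simp only [expect, split, update_funSplitAt_symm, wt_funSplitAt_symm, average]
  simp_rw [mul_assoc, Finset.mul_sum]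

lemma expect_sum_mul {ι : Type*} [Fintype ι] (p : E → ℝ) (c : ι → ℝ)
    (g : ι → (E → Bool) → ℝ) :
    expect p (fun C => ∑ i, c i * g i C) = ∑ i, c i * expect p (g i) := by
  simp only [expect, Finset.mul_sum]
  rw [Finset.sum_comm]
  simp_rw [mul_left_comm]

lemma Pr_eq_expect (p : E → ℝ) (A : Set (E → Bool)) : Pr p A = expect p (A.indicator 1) := by
  refine Finset.sum_congr rfl fun C _ => ?_
  by_cases h : C ∈ A <;> simp [h]

lemma Pr2_eq_expect (p : E → ℝ) (X : Set ((E → Bool) × (E → Bool))) :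
    Pr2 p X = expect p fun C₁ => expect p fun C₂ => X.indicator 1 (C₁, C₂) := by
  rw [Pr2, Fintype.sum_prod_type]
  refine Finset.sum_congr rfl fun C₁ _ => ?_
  simp only [expect, Finset.mul_sum]
  refine Finset.sum_congr rfl fun C₂ _ => ?_
  by_cases h : (C₁, C₂) ∈ X <;> simp [h]

lemma Pr_eq_sum_slice (p : E → ℝ) (e : E) (A : Set (E → Bool)) :
    Pr p A = ∑ b, bernWeight (p e) b * Pr p (slice A e b) := by
  simp only [Pr_eq_expect, expect_eq_sum_update p e (A.indicator 1)]
  rfl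

lemma Pr2_eq_sum_slice₂ (p : E → ℝ) (e : E) (X : Set ((E → Bool) × (E → Bool))) :
    Pr2 p X = ∑ b₁, ∑ b₂,
      bernWeight (p e) b₁ * bernWeight (p e) b₂ * Pr2 p (slice₂ X e b₁ b₂) := by
  have inner : ∀ C₁, expect p (fun C₂ => X.indicator 1 (C₁, C₂))
      = ∑ b₂, bernWeight (p e) b₂ * expect p (fun C₂ => X.indicator 1 (C₁, update C₂ e b₂)) :=
    fun C₁ => expect_eq_sum_update p e _
  rw [Pr2_eq_expect, expect_eq_sum_update p e]
  refine Finset.sum_congr rfl fun b₁ _ => ?_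
  simp_rw [inner, expect_sum_mul, Finset.mul_sum, mul_assoc, Pr2_eq_expect]
  rfl

lemma Pr2_prod (p : E → ℝ) (A B : Set (E → Bool)) :
    Pr2 p {x | x.1 ∈ A ∧ x.2 ∈ B} = Pr p A * Pr p B := by
  rw [Pr2, Pr, Pr, Finset.sum_mul_sum, Fintype.sum_prod_type]
  refine Finset.sum_congr rfl fun C₁ _ => Finset.sum_congr rfl fun C₂ _ => ?_
  by_cases h₁ : C₁ ∈ A <;> by_cases h₂ : C₂ ∈ B <;> simp [h₁, h₂]

lemma Pr_mono {p : E → ℝ} (hp : ∀ e, 0 ≤ p e ∧ p e ≤ 1) {A B : Set (E → Bool)}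
    (h : A ⊆ B) : Pr p A ≤ Pr p B :=
  Finset.sum_le_sum fun C _ => Set.indicator_le_indicator_of_subset h (wt_nonneg hp) C

theorem PairTree.Pr_mul_Pr_le_Pr2_spliceEvent {p : E → ℝ} (hp : ∀ e, 0 ≤ p e ∧ p e ≤ 1)
    {T : PairTree E} {u : Finset E} (hT : T.valid u) {A B : Set (E → Bool)}
    (hA : UpwardClosed A) (hB : UpwardClosed B) :
    Pr p A * Pr p B ≤ Pr2 p (spliceEvent T A B) := by
  induction T generalizing u A B with
  | leaf => rw [spliceEvent_leaf, Pr2_prod]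
  | node e toS child ih =>
    obtain ⟨-, hchild⟩ := hT
    rw [Pr_eq_sum_slice p e A, Pr_eq_sum_slice p e B, Pr2_eq_sum_slice₂ p e]
    refine mul_le_sum_sum_bernWeight (hp e) (Pr_mono hp (hA.slice_false_subset e))
      (Pr_mono hp (hB.slice_false_subset e)) toS _ fun b₁ b₂ => ?_
    rw [slice₂_spliceEvent_node hchild]
    exact ih b₁ b₂ (hchild b₁ b₂) (hA.slice e b₁) (hB.slice e _)

/-- Decision tree Harris–Kleitman inequality. -/
theorem decision_tree_HK
    {V : Type*} [Fintype V] [DecidableEq V] (G : SimpleGraph V) [DecidableRel G.Adj]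
    (p : G.edgeSet → ℝ) (hp : ∀ e, 0 ≤ p e ∧ p e ≤ 1)
    (T : PairTree G.edgeSet) (hT : T.valid ∅)
    (A B : Set (G.edgeSet → Bool)) (hA : UpwardClosed A) (hB : UpwardClosed B) :
    Pr2 p {x | x.1 ∈ A ∧ splice (T.buildS x.1 x.2) x.1 x.2 ∈ B} ≥ Pr p A * Pr p B :=
  PairTree.Pr_mul_Pr_le_Pr2_spliceEvent hp hT hA hB

end DTPerc
end

section
/- (Decision tree colored-percolation inequality.) Let E be a finite set. In the generalized decision-tree model, take Ω₁(e)={(x,y,z)∈{0,1}³ : x⊕y⊕z=0}={000,011,101,110} with μ₁(e) uniform (probability 1/4 each), and Ω₂(e)={0,1}³ with μ₂(e) uniform (probability 1/8 each). For closed-upward events U,V,W ⊆ {0,1}^E, let U×V×W denote the event that the configuration of first coordinates of C lies in U, the configuration of second coordinates lies in V, and the configuration of third coordinates lies in W. Then for every generating decision tree T with random output configuration C, P(C₁∈U×V×W) ≤ P(C∈U×V×W) ≤ P(C₂∈U×V×W), where C₁ has distribution Π_e μ₁(e) and C₂ has distribution Π_e μ₂(e). -/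
namespace GenDT

/-- A generating decision tree: every node queries an edge and either samples its value
from the first probability space (`node1`) or the second one (`node2`), with one child
for each possible sampled value. -/
inductive GTree (E : Type u) (Ω₁ : E → Type v) (Ω₂ : E → Type w) : Type (max u v w)
  | leaf : GTree E Ω₁ Ω₂
  | node1 (e : E) (child : Ω₁ e → GTree E Ω₁ Ω₂) : GTree E Ω₁ Ω₂
  | node2 (e : E) (child : Ω₂ e → GTree E Ω₁ Ω₂) : GTree E Ω₁ Ω₂

variable {E : Type*} [Fintype E] [DecidableEq E] {Ω₁ : E → Type*} {Ω₂ : E → Type*}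
  [∀ e, Fintype (Ω₁ e)] [∀ e, Fintype (Ω₂ e)]

/-- Along each root-to-leaf path, every edge of `rem` is queried exactly once. -/
def GTree.complete : GTree E Ω₁ Ω₂ → Finset E → Prop
  | .leaf, rem => rem = ∅
  | .node1 e child, rem => e ∈ rem ∧ ∀ x, (child x).complete (rem.erase e)
  | .node2 e child, rem => e ∈ rem ∧ ∀ x, (child x).complete (rem.erase e)

/-- The probability that the run of the tree outputs exactly the configuration `C`,
when values at `node1`/`node2` nodes are sampled independently with mass functions
`m₁`/`m₂`. -/
def GTree.mass (m₁ : ∀ e, Ω₁ e → ℝ) (m₂ : ∀ e, Ω₂ e → ℝ) :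
    GTree E Ω₁ Ω₂ → (∀ e, Ω₁ e ⊕ Ω₂ e) → ℝ
  | .leaf, _ => 1
  | .node1 e child, C =>
      match C e with
      | .inl x => m₁ e x * (child x).mass m₁ m₂ C
      | .inr _ => 0
  | .node2 e child, C =>
      match C e with
      | .inl _ => 0
      | .inr x => m₂ e x * (child x).mass m₁ m₂ C

/-- Mass function of `C₁`, the configuration sampled entirely from the first spaces. -/
def mass1 (m₁ : ∀ e, Ω₁ e → ℝ) (C : ∀ e, Ω₁ e ⊕ Ω₂ e) : ℝ :=
  ∏ e, match C e with
       | .inl x => m₁ e x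
       | .inr _ => 0

/-- Mass function of `C₂`, the configuration sampled entirely from the second spaces. -/
def mass2 (m₂ : ∀ e, Ω₂ e → ℝ) (C : ∀ e, Ω₁ e ⊕ Ω₂ e) : ℝ :=
  ∏ e, match C e with
       | .inl _ => 0
       | .inr x => m₂ e x

/-- Probability of an event under a mass function on a finite configuration space. -/
noncomputable def PrOf {Ω : Type*} [Fintype Ω] (mass : Ω → ℝ) (A : Set Ω) : ℝ :=
  ∑ x : Ω, A.indicator mass x

/-- An event of configurations in `{0,1}^E` is closed upward if it is preserved by
turning more coordinates to `true`. -/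
def UpwardClosed (A : Set (E → Bool)) : Prop :=
  ∀ C₁ C₂ : E → Bool, C₁ ∈ A → (∀ e, C₁ e = true → C₂ e = true) → C₂ ∈ A

/-- Triples of bits. -/
abbrev B3 : Type := Bool × Bool × Bool

/-- Triples of bits with xor equal to `0`: `{000, 011, 101, 110}`. -/
abbrev XorZero : Type := {x : B3 // xor x.1 (xor x.2.1 x.2.2) = false}

/-- The triple of bits carried by a value of `Ω₁(e) ⊔ Ω₂(e)`. -/
def bits : XorZero ⊕ B3 → B3
  | .inl x => x.1
  | .inr x => x

/-- `μ₁(e)`: uniform on the four xor-zero triples. -/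
noncomputable def massXor : (e : E) → XorZero → ℝ := fun _ _ => 1 / 4

/-- `μ₂(e)`: uniform on all eight triples. -/
noncomputable def massAll : (e : E) → B3 → ℝ := fun _ _ => 1 / 8

/-- The event `U × V × W`: the configurations of first, second and third coordinates
lie in `U`, `V` and `W` respectively. -/
def CoordEvent₃ (U V W : Set (E → Bool)) : Set (E → XorZero ⊕ B3) :=
  {C | (fun e => (bits (C e)).1) ∈ U ∧ (fun e => (bits (C e)).2.1) ∈ V ∧
       (fun e => (bits (C e)).2.2) ∈ W}

/-! Induct on the tree, comparing a subtree with the product masses over the edges it has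
not yet queried. Conditioning on the value at the queried edge keeps an event of the form
`U × V × W` with `U`, `V`, `W` closed upward, so each induction step only has to compare the
two single-edge laws on such events. For `a`, `b`, `c` increasing on `{0,1}`, the uniform
average of `a x * b y * c z` over `{0,1}³` exceeds its average over the xor-zero triples by
`(a 1 - a 0) * (b 1 - b 0) * (c 1 - c 0) / 8 ≥ 0`. -/

theorem prOf_zero {α : Type*} [Fintype α] (A : Set α) : PrOf (fun _ => 0) A = 0 := by
  simp [PrOf]

theorem prOf_const_mul {α : Type*} [Fintype α] (c : ℝ) (w : α → ℝ) (A : Set α) :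
    PrOf (fun x => c * w x) A = c * PrOf w A := by
  simp only [PrOf, Finset.mul_sum, Set.indicator_mul_right]

section Configurations

variable {E : Type*} {Ω : E → Type*}

def prodMass (μ : ∀ e, Ω e → ℝ) (s : Finset E) (C : ∀ e, Ω e) : ℝ :=
  ∏ e ∈ s, μ e (C e)

@[simp]
theorem prodMass_empty (μ : ∀ e, Ω e → ℝ) : prodMass μ ∅ = fun _ => 1 := by
  funext C
  exact Finset.prod_empty

theorem prodMass_nonneg {μ : ∀ e, Ω e → ℝ} (hμ : ∀ e v, 0 ≤ μ e v) (s : Finset E)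
    (C : ∀ e, Ω e) : 0 ≤ prodMass μ s C :=
  Finset.prod_nonneg fun e _ => hμ e (C e)

variable [DecidableEq E]

theorem prodMass_update {s : Finset E} {e : E} (he : e ∈ s) (μ : ∀ e, Ω e → ℝ)
    (C : ∀ e, Ω e) (v : Ω e) :
    prodMass μ s (Function.update C e v) = μ e v * prodMass μ (s.erase e) C := by
  rw [prodMass, ← Finset.mul_prod_erase s _ he, Function.update_self]
  congr 1
  refine Finset.prod_congr rfl fun e' he' => ?_
  rw [Function.update_of_ne (Finset.ne_of_mem_erase he')]

variable [Fintype E] [∀ e, Fintype (Ω e)]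

theorem sum_sum_update {M : Type*} [AddCommMonoid M] (f : (∀ e, Ω e) → M) (e : E) :
    ∑ v : Ω e, ∑ C, f (Function.update C e v) = Fintype.card (Ω e) • ∑ C, f C := by
  let swap : Function.Involutive fun p : (∀ e, Ω e) × Ω e => (Function.update p.1 e p.2, p.1 e) :=
    fun p => by simp
  calc ∑ v : Ω e, ∑ C, f (Function.update C e v)
      = ∑ p : (∀ e, Ω e) × Ω e, f (Function.update p.1 e p.2) := by
        rw [Fintype.sum_prod_type, Finset.sum_comm]
    _ = ∑ p : (∀ e, Ω e) × Ω e, f p.1 := Equiv.sum_comp swap.toPerm (fun p => f p.1)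
    _ = Fintype.card (Ω e) • ∑ C, f C := by
        simp [Fintype.sum_prod_type, Finset.sum_const, Finset.smul_sum]

theorem card_mul_prOf (g : (∀ e, Ω e) → ℝ) (A : Set (∀ e, Ω e)) (e : E) :
    Fintype.card (Ω e) * PrOf g A =
      ∑ v : Ω e, PrOf (fun C => g (Function.update C e v)) ((Function.update · e v) ⁻¹' A) := by
  simp only [PrOf, ← nsmul_eq_mul, ← sum_sum_update _ e]
  exact Finset.sum_congr rfl fun v _ => Finset.sum_congr rfl fun C _ =>
    (Set.indicator_comp_right (Function.update · e v)).symm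

theorem card_mul_prOf_prodMass {s : Finset E} {e : E} (he : e ∈ s) (μ : ∀ e, Ω e → ℝ)
    (A : Set (∀ e, Ω e)) :
    Fintype.card (Ω e) * PrOf (prodMass μ s) A =
      ∑ v, μ e v * PrOf (prodMass μ (s.erase e)) ((Function.update · e v) ⁻¹' A) := by
  simp only [card_mul_prOf, prodMass_update he, prOf_const_mul]

theorem sum_mul_prOf_preimage_update {e : E} {α : Type*} [Fintype α] (m : α → ℝ) (f : α → Ω e)
    (w : (∀ e, Ω e) → ℝ) (A : Set (∀ e, Ω e)) :
    ∑ x, m x * PrOf w ((Function.update · e (f x)) ⁻¹' A) =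
      ∑ C, w C * PrOf m {x | Function.update C e (f x) ∈ A} := by
  classical
  simp only [PrOf, Finset.mul_sum, Set.indicator_apply, Set.mem_preimage, Set.mem_ofPred_eq,
    mul_ite, mul_zero]
  rw [Finset.sum_comm]
  simp only [mul_comm]

end Configurations

section Trees

variable {E : Type*} {Ω₁ Ω₂ : E → Type*} {m₁ : ∀ e, Ω₁ e → ℝ} {m₂ : ∀ e, Ω₂ e → ℝ}

def inlMass (m₁ : ∀ e, Ω₁ e → ℝ) (e : E) : Ω₁ e ⊕ Ω₂ e → ℝ := Sum.elim (m₁ e) 0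

def inrMass (m₂ : ∀ e, Ω₂ e → ℝ) (e : E) : Ω₁ e ⊕ Ω₂ e → ℝ := Sum.elim 0 (m₂ e)

theorem mass1_eq_prodMass [Fintype E] :
    mass1 m₁ = prodMass (inlMass (Ω₂ := Ω₂) m₁) Finset.univ := by
  funext C
  refine Finset.prod_congr rfl fun e _ => ?_
  cases C e <;> rfl

theorem mass2_eq_prodMass [Fintype E] :
    mass2 m₂ = prodMass (inrMass (Ω₁ := Ω₁) m₂) Finset.univ := by
  funext C
  refine Finset.prod_congr rfl fun e _ => ?_
  cases C e <;> rfl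

variable [DecidableEq E]

theorem GTree.mass_update_of_notMem {T : GTree E Ω₁ Ω₂} {s : Finset E} (hT : T.complete s)
    {e : E} (he : e ∉ s) (C : ∀ e, Ω₁ e ⊕ Ω₂ e) (v : Ω₁ e ⊕ Ω₂ e) :
    T.mass m₁ m₂ (Function.update C e v) = T.mass m₁ m₂ C := by
  induction T generalizing s with
  | leaf => rfl
  | node1 e' child ih =>
    have hne : e' ≠ e := ne_of_mem_of_not_mem hT.1 he
    simp only [GTree.mass, Function.update_of_ne hne,
      ih _ (hT.2 _) fun h => he (Finset.mem_of_mem_erase h)]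
  | node2 e' child ih =>
    have hne : e' ≠ e := ne_of_mem_of_not_mem hT.1 he
    simp only [GTree.mass, Function.update_of_ne hne,
      ih _ (hT.2 _) fun h => he (Finset.mem_of_mem_erase h)]

variable [Fintype E] [∀ e, Fintype (Ω₁ e)] [∀ e, Fintype (Ω₂ e)]

theorem GTree.card_mul_prOf_node1 {e : E} {child : Ω₁ e → GTree E Ω₁ Ω₂} {s : Finset E}
    (hT : (GTree.node1 e child).complete s) (A : Set (∀ e, Ω₁ e ⊕ Ω₂ e)) :
    Fintype.card (Ω₁ e ⊕ Ω₂ e) * PrOf ((GTree.node1 e child).mass m₁ m₂) A =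
      ∑ x, m₁ e x * PrOf ((child x).mass m₁ m₂) ((Function.update · e (.inl x)) ⁻¹' A) := by
  have hchild x C v : (child x).mass m₁ m₂ (Function.update C e v) = (child x).mass m₁ m₂ C :=
    GTree.mass_update_of_notMem (hT.2 x) (Finset.notMem_erase e s) C v
  rw [card_mul_prOf (Ω := fun e => Ω₁ e ⊕ Ω₂ e), Fintype.sum_sum_type]
  simp only [GTree.mass, Function.update_self, hchild, prOf_const_mul, prOf_zero,
    Finset.sum_const_zero, add_zero]

theorem GTree.card_mul_prOf_node2 {e : E} {child : Ω₂ e → GTree E Ω₁ Ω₂} {s : Finset E}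
    (hT : (GTree.node2 e child).complete s) (A : Set (∀ e, Ω₁ e ⊕ Ω₂ e)) :
    Fintype.card (Ω₁ e ⊕ Ω₂ e) * PrOf ((GTree.node2 e child).mass m₁ m₂) A =
      ∑ y, m₂ e y * PrOf ((child y).mass m₁ m₂) ((Function.update · e (.inr y)) ⁻¹' A) := by
  have hchild y C v : (child y).mass m₁ m₂ (Function.update C e v) = (child y).mass m₁ m₂ C :=
    GTree.mass_update_of_notMem (hT.2 y) (Finset.notMem_erase e s) C v
  rw [card_mul_prOf (Ω := fun e => Ω₁ e ⊕ Ω₂ e), Fintype.sum_sum_type]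
  simp only [GTree.mass, Function.update_self, hchild, prOf_const_mul, prOf_zero,
    Finset.sum_const_zero, zero_add]

theorem card_mul_prOf_prodMass_inlMass {s : Finset E} {e : E} (he : e ∈ s)
    (A : Set (∀ e, Ω₁ e ⊕ Ω₂ e)) :
    Fintype.card (Ω₁ e ⊕ Ω₂ e) * PrOf (prodMass (inlMass m₁) s) A =
      ∑ x, m₁ e x * PrOf (prodMass (inlMass m₁) (s.erase e))
        ((Function.update · e (.inl x)) ⁻¹' A) := by
  rw [card_mul_prOf_prodMass (Ω := fun e => Ω₁ e ⊕ Ω₂ e) he, Fintype.sum_sum_type]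
  simp [inlMass]

theorem card_mul_prOf_prodMass_inrMass {s : Finset E} {e : E} (he : e ∈ s)
    (A : Set (∀ e, Ω₁ e ⊕ Ω₂ e)) :
    Fintype.card (Ω₁ e ⊕ Ω₂ e) * PrOf (prodMass (inrMass m₂) s) A =
      ∑ y, m₂ e y * PrOf (prodMass (inrMass m₂) (s.erase e))
        ((Function.update · e (.inr y)) ⁻¹' A) := by
  rw [card_mul_prOf_prodMass (Ω := fun e => Ω₁ e ⊕ Ω₂ e) he, Fintype.sum_sum_type]
  simp [inrMass]

theorem sum_mul_prOf_preimage_update_le {A : Set (∀ e, Ω₁ e ⊕ Ω₂ e)} {e : E}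
    (hA : ∀ C, PrOf (m₁ e) {x | Function.update C e (.inl x) ∈ A} ≤
      PrOf (m₂ e) {y | Function.update C e (.inr y) ∈ A})
    {w : (∀ e, Ω₁ e ⊕ Ω₂ e) → ℝ} (hw : ∀ C, 0 ≤ w C) :
    ∑ x, m₁ e x * PrOf w ((Function.update · e (.inl x)) ⁻¹' A) ≤
      ∑ y, m₂ e y * PrOf w ((Function.update · e (.inr y)) ⁻¹' A) := by
  rw [sum_mul_prOf_preimage_update, sum_mul_prOf_preimage_update]
  exact Finset.sum_le_sum fun C _ => mul_le_mul_of_nonneg_left (hA C) (hw C)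

theorem GTree.prOf_mass_mem_Icc {𝒜 : Set (Set (∀ e, Ω₁ e ⊕ Ω₂ e))}
    (hclosed : ∀ A ∈ 𝒜, ∀ e v, (Function.update · e v) ⁻¹' A ∈ 𝒜)
    (hcmp : ∀ A ∈ 𝒜, ∀ e C, PrOf (m₁ e) {x | Function.update C e (.inl x) ∈ A} ≤
      PrOf (m₂ e) {y | Function.update C e (.inr y) ∈ A})
    (hm₁ : ∀ e x, 0 ≤ m₁ e x) (hm₂ : ∀ e y, 0 ≤ m₂ e y)
    {T : GTree E Ω₁ Ω₂} {s : Finset E} (hT : T.complete s) {A : Set (∀ e, Ω₁ e ⊕ Ω₂ e)}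
    (hA : A ∈ 𝒜) :
    PrOf (T.mass m₁ m₂) A ∈
      Set.Icc (PrOf (prodMass (inlMass m₁) s) A) (PrOf (prodMass (inrMass m₂) s) A) := by
  rcases isEmpty_or_nonempty (∀ e, Ω₁ e ⊕ Ω₂ e) with hempty | ⟨⟨C₀⟩⟩
  · simp [PrOf]
  have hprod₁ (s : Finset E) : ∀ C : ∀ e, Ω₁ e ⊕ Ω₂ e, 0 ≤ prodMass (inlMass m₁) s C :=
    prodMass_nonneg (by rintro e (x | y) <;> simp [inlMass, hm₁]) s
  have hprod₂ (s : Finset E) : ∀ C : ∀ e, Ω₁ e ⊕ Ω₂ e, 0 ≤ prodMass (inrMass m₂) s C :=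
    prodMass_nonneg (by rintro e (x | y) <;> simp [inrMass, hm₂]) s
  induction T generalizing s A with
  | leaf =>
    obtain rfl : s = ∅ := hT
    simp [GTree.mass]
  | node1 e child ih =>
    have hk : (0 : ℝ) < Fintype.card (Ω₁ e ⊕ Ω₂ e) := by
      exact_mod_cast Fintype.card_pos_iff.2 ⟨C₀ e⟩
    have ih x := ih x (hT.2 x) (hclosed A hA e (.inl x))
    constructor
    · rw [← mul_le_mul_iff_right₀ hk, card_mul_prOf_prodMass_inlMass hT.1,
        GTree.card_mul_prOf_node1 hT]
      exact Finset.sum_le_sum fun x _ => mul_le_mul_of_nonneg_left (ih x).1 (hm₁ e x)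
    · rw [← mul_le_mul_iff_right₀ hk, card_mul_prOf_prodMass_inrMass hT.1,
        GTree.card_mul_prOf_node1 hT]
      calc _ ≤ ∑ x, m₁ e x * PrOf (prodMass (inrMass m₂) (s.erase e))
              ((Function.update · e (.inl x)) ⁻¹' A) :=
            Finset.sum_le_sum fun x _ => mul_le_mul_of_nonneg_left (ih x).2 (hm₁ e x)
        _ ≤ _ := sum_mul_prOf_preimage_update_le (hcmp A hA e) (hprod₂ _)
  | node2 e child ih =>
    have hk : (0 : ℝ) < Fintype.card (Ω₁ e ⊕ Ω₂ e) := by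
      exact_mod_cast Fintype.card_pos_iff.2 ⟨C₀ e⟩
    have ih y := ih y (hT.2 y) (hclosed A hA e (.inr y))
    constructor
    · rw [← mul_le_mul_iff_right₀ hk, card_mul_prOf_prodMass_inlMass hT.1,
        GTree.card_mul_prOf_node2 hT]
      calc _ ≤ ∑ y, m₂ e y * PrOf (prodMass (inlMass m₁) (s.erase e))
              ((Function.update · e (.inr y)) ⁻¹' A) :=
            sum_mul_prOf_preimage_update_le (hcmp A hA e) (hprod₁ _)
        _ ≤ _ := Finset.sum_le_sum fun y _ => mul_le_mul_of_nonneg_left (ih y).1 (hm₂ e y)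
    · rw [← mul_le_mul_iff_right₀ hk, card_mul_prOf_prodMass_inrMass hT.1,
        GTree.card_mul_prOf_node2 hT]
      exact Finset.sum_le_sum fun y _ => mul_le_mul_of_nonneg_left (ih y).2 (hm₂ e y)

end Trees

section Bits

theorem sum_xorZero (f : B3 → ℝ) : ∑ x : XorZero, f x =
    f (true, true, false) + f (true, false, true) + f (false, true, true) +
      f (false, false, false) := by
  rw [← Finset.sum_subtype {y : B3 | xor y.1 (xor y.2.1 y.2.2) = false}
    (fun _ => Finset.mem_filter_univ _) f, Finset.sum_filter]
  simp only [Fintype.sum_prod_type, Fintype.sum_bool]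
  simp [add_assoc]

theorem sum_xorZero_le_sum {a b c : Bool → ℝ} (ha : a false ≤ a true) (hb : b false ≤ b true)
    (hc : c false ≤ c true) :
    ∑ x : XorZero, a x.1.1 * b x.1.2.1 * c x.1.2.2 / 4 ≤
      ∑ y : B3, a y.1 * b y.2.1 * c y.2.2 / 8 := by
  rw [sum_xorZero (fun y => a y.1 * b y.2.1 * c y.2.2 / 4)]
  simp only [Fintype.sum_prod_type, Fintype.sum_bool]
  linear_combination (1 / 8 : ℝ) *
    mul_nonneg (mul_nonneg (sub_nonneg.2 ha) (sub_nonneg.2 hb)) (sub_nonneg.2 hc)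

theorem prOf_xorZero_le_prOf {p q r : Bool → Prop} (hp : p false → p true)
    (hq : q false → q true) (hr : r false → r true) :
    PrOf (fun _ : XorZero => (1 / 4 : ℝ)) {x | p x.1.1 ∧ q x.1.2.1 ∧ r x.1.2.2} ≤
      PrOf (fun _ : B3 => (1 / 8 : ℝ)) {y | p y.1 ∧ q y.2.1 ∧ r y.2.2} := by
  classical
  let ind (p : Bool → Prop) (t : Bool) : ℝ := if p t then 1 else 0
  have hmono {p : Bool → Prop} (hp : p false → p true) : ind p false ≤ ind p true := by
    simp only [ind]
    split_ifs <;> simp_all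
  simp only [PrOf]
  convert sum_xorZero_le_sum (hmono hp) (hmono hq) (hmono hr) using 3 <;>
    simp only [ind, Set.indicator_apply, Set.mem_ofPred_eq] <;> split_ifs <;> simp_all

end Bits

section ColoredPercolation

variable {E : Type*} [DecidableEq E]

theorem preimage_update_coordEvent₃ (U V W : Set (E → Bool)) (e : E) (v : XorZero ⊕ B3) :
    (Function.update · e v) ⁻¹' CoordEvent₃ U V W =
      CoordEvent₃ ((Function.update · e (bits v).1) ⁻¹' U)
        ((Function.update · e (bits v).2.1) ⁻¹' V) ((Function.update · e (bits v).2.2) ⁻¹' W) := by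
  ext C
  have hcomp (φ : XorZero ⊕ B3 → Bool) :
      (fun i => φ (Function.update C e v i)) = Function.update (fun i => φ (C i)) e (φ v) :=
    Function.comp_update φ C e v
  simp only [CoordEvent₃, Set.mem_preimage, Set.mem_ofPred_eq, hcomp (fun w => (bits w).1),
    hcomp (fun w => (bits w).2.1), hcomp (fun w => (bits w).2.2)]

theorem UpwardClosed.preimage_update {U : Set (E → Bool)} (hU : UpwardClosed U) (e : E)
    (b : Bool) : UpwardClosed ((Function.update · e b) ⁻¹' U) := by
  intro f g hf hfg
  refine hU _ _ hf fun e' => ?_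
  rcases eq_or_ne e' e with rfl | hne
  · simp
  · simpa [hne] using hfg e'

theorem UpwardClosed.update_true_mem {U : Set (E → Bool)} (hU : UpwardClosed U) {f : E → Bool}
    {e : E} (h : Function.update f e false ∈ U) : Function.update f e true ∈ U := by
  refine hU _ _ h fun e' => ?_
  rcases eq_or_ne e' e with rfl | hne
  · simp
  · simp [hne]

theorem prOf_update_coordEvent₃_le {U V W : Set (E → Bool)} (hU : UpwardClosed U)
    (hV : UpwardClosed V) (hW : UpwardClosed W) (e : E) (C : E → XorZero ⊕ B3) :
    PrOf (massXor e) {x | Function.update C e (.inl x) ∈ CoordEvent₃ U V W} ≤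
      PrOf (massAll e) {y | Function.update C e (.inr y) ∈ CoordEvent₃ U V W} := by
  have hmem v := Set.ext_iff.1 (preimage_update_coordEvent₃ U V W e v) C
  unfold massXor massAll
  convert prOf_xorZero_le_prOf
    (p := fun t => Function.update (fun i => (bits (C i)).1) e t ∈ U)
    (q := fun t => Function.update (fun i => (bits (C i)).2.1) e t ∈ V)
    (r := fun t => Function.update (fun i => (bits (C i)).2.2) e t ∈ W)
    hU.update_true_mem hV.update_true_mem hW.update_true_mem using 2 <;>
    exact Set.ext fun _ => hmem _

end ColoredPercolation

/-- Decision tree colored-percolation inequality: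
`P(C₁ ∈ U×V×W) ≤ P(C ∈ U×V×W) ≤ P(C₂ ∈ U×V×W)`. -/
theorem colored_inequality
    (U V W : Set (E → Bool))
    (hU : UpwardClosed U) (hV : UpwardClosed V) (hW : UpwardClosed W)
    (T : GTree E (fun _ => XorZero) (fun _ => B3)) (hT : T.complete Finset.univ) :
    PrOf (mass1 (massXor (E := E))) (CoordEvent₃ U V W)
        ≤ PrOf (T.mass massXor massAll) (CoordEvent₃ U V W) ∧
      PrOf (T.mass massXor massAll) (CoordEvent₃ U V W)
        ≤ PrOf (mass2 (massAll (E := E))) (CoordEvent₃ U V W) := by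
  let 𝒜 : Set (Set (E → XorZero ⊕ B3)) :=
    {A | ∃ U V W, UpwardClosed U ∧ UpwardClosed V ∧ UpwardClosed W ∧ A = CoordEvent₃ U V W}
  have hclosed : ∀ A ∈ 𝒜, ∀ e v, (Function.update · e v) ⁻¹' A ∈ 𝒜 := by
    rintro _ ⟨U, V, W, hU, hV, hW, rfl⟩ e v
    exact ⟨_, _, _, hU.preimage_update e _, hV.preimage_update e _, hW.preimage_update e _,
      preimage_update_coordEvent₃ U V W e v⟩
  have hcmp : ∀ A ∈ 𝒜, ∀ e C, PrOf (massXor e) {x | Function.update C e (.inl x) ∈ A} ≤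
      PrOf (massAll e) {y | Function.update C e (.inr y) ∈ A} := by
    rintro _ ⟨U, V, W, hU, hV, hW, rfl⟩ e C
    exact prOf_update_coordEvent₃_le hU hV hW e C
  rw [mass1_eq_prodMass, mass2_eq_prodMass]
  exact T.prOf_mass_mem_Icc hclosed hcmp (by norm_num [massXor]) (by norm_num [massAll]) hT
    ⟨U, V, W, hU, hV, hW, rfl⟩

end GenDT
end
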